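/- arXiv:1411.4503 — 6 statements merged into one kernel-verified Lean document; each statement's English description precedes it below -/
import Mathlib

section
/- Let x_1,…,x_n ∈ ℝ^d, let x̄ = (1/n)·Σ_{i=1}^n x_i, and let γ > 0. Then z = (z_1,…,z_n) = (0,…,0) is a global minimizer of the function (z_1,…,z_n) ↦ Σ_{i=1}^n [ (1/2)·‖x_i − x̄ − z_i‖² + γ·‖z_i‖ ] over (ℝ^d)^n if and only if γ ≥ γ* := max_{1≤i≤n} ‖x_i − x̄‖. -/
/-!
The objective is separable: `F z = ∑ i, f (x i - x̄) (z i)` with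
`f a w = ½‖a - w‖² + γ‖w‖`, so `0` minimizes `F` iff `0` minimizes every summand.
For one summand, `‖a‖ ≤ γ` makes `0` optimal by Cauchy–Schwarz, while if `γ < ‖a‖`
the soft-thresholded point `(1 - γ/‖a‖) • a` beats `0` by `½(‖a‖ - γ)²`.
-/

open Finset

section Separable

variable {ι : Type*} [Fintype ι] [DecidableEq ι] {E : ι → Type*}

theorem forall_sum_le_sum_iff_forall_le (f : (i : ι) → E i → ℝ) (c : (i : ι) → E i) :
    (∀ z : (i : ι) → E i, ∑ i, f i (c i) ≤ ∑ i, f i (z i)) ↔ ∀ i w, f i (c i) ≤ f i w := by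
  refine ⟨fun h i w => ?_, fun h z => sum_le_sum fun i _ => h i (z i)⟩
  by_contra! hlt
  refine (h (Function.update c i w)).not_gt (sum_lt_sum (fun j _ => ?_) ⟨i, mem_univ i, ?_⟩)
  · rcases eq_or_ne j i with rfl | hj
    · simpa using hlt.le
    · simp [Function.update_of_ne hj]
  · simpa using hlt

end Separable

section GroupLasso

variable {E : Type*} [NormedAddCommGroup E]

noncomputable def groupLassoObjective (γ : ℝ) (a w : E) : ℝ := 1 / 2 * ‖a - w‖ ^ 2 + γ * ‖w‖

theorem groupLassoObjective_zero (γ : ℝ) (a : E) :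
    groupLassoObjective γ a 0 = 1 / 2 * ‖a‖ ^ 2 := by
  simp [groupLassoObjective]

theorem groupLassoObjective_zero_le [InnerProductSpace ℝ E] {γ : ℝ} {a : E} (h : ‖a‖ ≤ γ) (w : E) :
    groupLassoObjective γ a 0 ≤ groupLassoObjective γ a w := by
  rw [groupLassoObjective_zero, groupLassoObjective, norm_sub_sq_real]
  nlinarith [real_inner_le_norm a w, norm_nonneg w]

theorem groupLassoObjective_softThreshold [NormedSpace ℝ E] {γ : ℝ} {a : E} (hγ : 0 ≤ γ) (ha : γ ≤ ‖a‖)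
    (ha₀ : a ≠ 0) :
    groupLassoObjective γ a ((1 - γ / ‖a‖) • a) = γ * ‖a‖ - γ ^ 2 / 2 := by
  have hpos : 0 < ‖a‖ := norm_pos_iff.mpr ha₀
  have hsub : a - (1 - γ / ‖a‖) • a = (γ / ‖a‖) • a := by
    rw [sub_smul, one_smul, sub_sub_cancel]
  have hcoef : 0 ≤ 1 - γ / ‖a‖ := sub_nonneg.mpr ((div_le_one hpos).mpr ha)
  rw [groupLassoObjective, hsub, norm_smul, norm_smul, Real.norm_of_nonneg hcoef,
    Real.norm_of_nonneg (div_nonneg hγ hpos.le)]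
  field_simp
  ring

theorem forall_groupLassoObjective_zero_le_iff [InnerProductSpace ℝ E] {γ : ℝ} (hγ : 0 ≤ γ) (a : E) :
    (∀ w, groupLassoObjective γ a 0 ≤ groupLassoObjective γ a w) ↔ ‖a‖ ≤ γ := by
  refine ⟨fun h => ?_, groupLassoObjective_zero_le⟩
  by_contra! hlt
  have ha₀ : a ≠ 0 := norm_pos_iff.mp (hγ.trans_lt hlt)
  have := h ((1 - γ / ‖a‖) • a)
  rw [groupLassoObjective_zero, groupLassoObjective_softThreshold hγ hlt.le ha₀] at this
  nlinarith

end GroupLasso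

theorem zero_minimizer_iff_gamma_ge_gammaStar_general
    (d n : ℕ) (hn : 0 < n)
    (x : Fin n → EuclideanSpace ℝ (Fin d))
    (xbar : EuclideanSpace ℝ (Fin d))
    (γ : ℝ) (hγ : 0 < γ)
    (F : (Fin n → EuclideanSpace ℝ (Fin d)) → ℝ)
    (hF : ∀ z, F z = ∑ i : Fin n, ((1 / 2) * ‖x i - xbar - z i‖ ^ 2 + γ * ‖z i‖))
    (γstar : ℝ)
    (hγstar : γstar = Finset.univ.sup'
      (Finset.univ_nonempty_iff.mpr ⟨⟨0, hn⟩⟩) (fun i : Fin n => ‖x i - xbar‖)) :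
    (∀ z, F 0 ≤ F z) ↔ γstar ≤ γ := by
  have hF' : F = fun z => ∑ i, groupLassoObjective γ (x i - xbar) (z i) := funext hF
  subst hF' hγstar
  rw [Finset.sup'_le_iff]
  simpa [forall_groupLassoObjective_zero_le_iff hγ.le] using
    forall_sum_le_sum_iff_forall_le (fun i => groupLassoObjective γ (x i - xbar)) 0

/-- `z = 0` is a global minimizer of
`z ↦ Σᵢ [ (1/2)‖xᵢ - x̄ - zᵢ‖² + γ‖zᵢ‖ ]` if and only if
`γ ≥ γ* = maxᵢ ‖xᵢ - x̄‖`, the critical value at which the first outlier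
is detected. -/
theorem zero_minimizer_iff_gamma_ge_gammaStar
    (d n : ℕ) (hn : 0 < n)
    (x : Fin n → EuclideanSpace ℝ (Fin d))
    (xbar : EuclideanSpace ℝ (Fin d))
    (hxbar : xbar = (n : ℝ)⁻¹ • ∑ i : Fin n, x i)
    (γ : ℝ) (hγ : 0 < γ)
    (F : (Fin n → EuclideanSpace ℝ (Fin d)) → ℝ)
    (hF : ∀ z, F z = ∑ i : Fin n, ((1 / 2) * ‖x i - xbar - z i‖ ^ 2 + γ * ‖z i‖))
    (γstar : ℝ)
    (hγstar : γstar = Finset.univ.sup'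
      (Finset.univ_nonempty_iff.mpr ⟨⟨0, hn⟩⟩) (fun i : Fin n => ‖x i - xbar‖)) :
    (∀ z, F 0 ≤ F z) ↔ γstar ≤ γ :=
  zero_minimizer_iff_gamma_ge_gammaStar_general d n hn x xbar γ hγ F hF γstar hγstar
end

section
/- Let x̄_1, x̄_2 ∈ ℝ^d, let n1, n2 ≥ 1 be integers with n = n1 + n2, let w > 0 and λ > 0, and define h(μ_1, μ_2) = (n1/2)·‖x̄_1 − μ_1‖² + (n2/2)·‖x̄_2 − μ_2‖² + λ·w·‖μ_2 − μ_1‖ for μ_1, μ_2 ∈ ℝ^d. Then the point μ_1 = μ_2 = μ̄ := (n1·x̄_1 + n2·x̄_2)/n is a global minimizer of h if and only if λ·w ≥ (n1·n2/n)·‖x̄_2 − x̄_1‖. -/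
/-!
With `a = n₁`, `b = n₂`, `c = ab/(a+b)` and `v = x̄₂ - x̄₁`, the identity
`a‖u₁‖² + b‖u₂‖² = ‖a•u₁ + b•u₂‖²/(a+b) + c‖u₂ - u₁‖²`, applied to `uᵢ = x̄ᵢ - μᵢ`, splits
`h(μ₁, μ₂)` into a nonnegative term,
which vanishes exactly when the weighted mean of `μ₁, μ₂` is `μ̄`, plus
`g(μ₂ - μ₁)` with `g δ = (c/2)‖v - δ‖² + λw‖δ‖`. Hence `μ̄` minimizes `h` iff `δ = 0` minimizes `g`,
i.e. iff `c⟪v, δ⟫ ≤ (c/2)‖δ‖² + λw‖δ‖` for all `δ`. Cauchy–Schwarz gives this when `c‖v‖ ≤ λw`;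
conversely, testing `δ = t•v` and letting `t → 0⁺` gives `c‖v‖² ≤ λw‖v‖`.
-/

open Filter Topology RealInnerProductSpace

variable {E : Type*} [NormedAddCommGroup E] [InnerProductSpace ℝ E]

theorem mul_norm_sq_add_mul_norm_sq_eq {a b : ℝ} (hab : a + b ≠ 0) (u w : E) :
    a * ‖u‖ ^ 2 + b * ‖w‖ ^ 2 =
      ‖a • u + b • w‖ ^ 2 / (a + b) + a * b / (a + b) * ‖w - u‖ ^ 2 := by
  rw [norm_add_sq_real, norm_sub_sq_real, norm_smul, norm_smul, real_inner_smul_left,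
    real_inner_smul_right, real_inner_comm u w, Real.norm_eq_abs, Real.norm_eq_abs, mul_pow,
    mul_pow, sq_abs, sq_abs]
  field_simp
  ring

theorem forall_norm_sq_le_norm_sub_sq_add_norm_iff {c L : ℝ} (hc : 0 ≤ c)
    (hL : 0 ≤ L) (v : E) :
    (∀ δ : E, c / 2 * ‖v‖ ^ 2 ≤ c / 2 * ‖v - δ‖ ^ 2 + L * ‖δ‖) ↔ c * ‖v‖ ≤ L := by
  simp_rw [norm_sub_sq_real v]
  constructor
  · intro hmin
    have along_v : ∀ t > 0, c * ‖v‖ ^ 2 ≤ t * (c / 2 * ‖v‖ ^ 2) + L * ‖v‖ := by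
      intro t ht
      have := hmin (t • v)
      rw [real_inner_smul_right, real_inner_self_eq_norm_sq, norm_smul,
        Real.norm_of_nonneg ht.le] at this
      nlinarith
    have limit : c * ‖v‖ ^ 2 ≤ L * ‖v‖ := by
      have : Tendsto (fun t : ℝ => t * (c / 2 * ‖v‖ ^ 2) + L * ‖v‖) (𝓝[>] 0) (𝓝 (L * ‖v‖)) :=
        tendsto_nhdsWithin_of_tendsto_nhds <| Continuous.tendsto' (by fun_prop) 0 _ (by simp)
      exact ge_of_tendsto this (eventually_nhdsWithin_of_forall along_v)
    rcases (norm_nonneg v).eq_or_lt with hv | hv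
    · simpa [← hv] using hL
    · nlinarith
  · intro hcv δ
    have cauchy_schwarz : c * ⟪v, δ⟫ ≤ L * ‖δ‖ :=
      calc c * ⟪v, δ⟫ ≤ c * (‖v‖ * ‖δ‖) := mul_le_mul_of_nonneg_left (real_inner_le_norm v δ) hc
        _ = c * ‖v‖ * ‖δ‖ := by ring
        _ ≤ L * ‖δ‖ := mul_le_mul_of_nonneg_right hcv (norm_nonneg δ)
    nlinarith [sq_nonneg ‖δ‖]

noncomputable def twoSegmentObjective (a b L : ℝ) (x₁ x₂ μ₁ μ₂ : E) : ℝ :=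
  a / 2 * ‖x₁ - μ₁‖ ^ 2 + b / 2 * ‖x₂ - μ₂‖ ^ 2 + L * ‖μ₂ - μ₁‖

theorem twoSegmentObjective_eq_norm_sq_div_add {a b : ℝ} (hab : a + b ≠ 0) (L : ℝ)
    (x₁ x₂ μ₁ μ₂ : E) :
    twoSegmentObjective a b L x₁ x₂ μ₁ μ₂ =
      ‖a • (x₁ - μ₁) + b • (x₂ - μ₂)‖ ^ 2 / (2 * (a + b))
        + (a * b / (a + b) / 2 * ‖(x₂ - x₁) - (μ₂ - μ₁)‖ ^ 2 + L * ‖μ₂ - μ₁‖) := by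
  have hsplit := mul_norm_sq_add_mul_norm_sq_eq hab (x₁ - μ₁) (x₂ - μ₂)
  rw [show (x₂ - μ₂) - (x₁ - μ₁) = (x₂ - x₁) - (μ₂ - μ₁) by abel] at hsplit
  rw [twoSegmentObjective, mul_comm 2, ← div_div]
  linarith

theorem forall_twoSegmentObjective_weightedMean_le_iff {a b : ℝ} (hab : 0 < a + b) (L : ℝ)
    (x₁ x₂ : E) :
    (∀ μ₁ μ₂, twoSegmentObjective a b L x₁ x₂ ((a + b)⁻¹ • (a • x₁ + b • x₂))
        ((a + b)⁻¹ • (a • x₁ + b • x₂)) ≤ twoSegmentObjective a b L x₁ x₂ μ₁ μ₂) ↔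
      ∀ δ : E, a * b / (a + b) / 2 * ‖x₂ - x₁‖ ^ 2 ≤
        a * b / (a + b) / 2 * ‖(x₂ - x₁) - δ‖ ^ 2 + L * ‖δ‖ := by
  set m := (a + b)⁻¹ • (a • x₁ + b • x₂)
  set g : E → ℝ := fun δ => a * b / (a + b) / 2 * ‖(x₂ - x₁) - δ‖ ^ 2 + L * ‖δ‖
  have hF : ∀ μ₁ μ₂, twoSegmentObjective a b L x₁ x₂ μ₁ μ₂ =
      ‖a • (x₁ - μ₁) + b • (x₂ - μ₂)‖ ^ 2 / (2 * (a + b)) + g (μ₂ - μ₁) :=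
    twoSegmentObjective_eq_norm_sq_div_add hab.ne' L x₁ x₂
  -- moving `μ₁, μ₂` apart by `δ` while keeping their weighted mean at `m` costs exactly `g δ`
  have along_mean : ∀ δ : E,
      twoSegmentObjective a b L x₁ x₂ (m - (b / (a + b)) • δ) (m + (a / (a + b)) • δ) = g δ := by
    intro δ
    have hmean :
        a • (x₁ - (m - (b / (a + b)) • δ)) + b • (x₂ - (m + (a / (a + b)) • δ)) = 0 := by
      simp only [m]
      match_scalars <;> field_simp <;> ring
    have hdiff : m + (a / (a + b)) • δ - (m - (b / (a + b)) • δ) = δ := by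
      rw [add_sub_sub_cancel, ← add_smul, ← add_div, div_self hab.ne', one_smul]
    simp [hF, hmean, hdiff]
  have hm : twoSegmentObjective a b L x₁ x₂ m m = g 0 := by simpa using along_mean 0
  constructor
  · intro hmin δ
    simpa [hm, along_mean, g] using hmin (m - (b / (a + b)) • δ) (m + (a / (a + b)) • δ)
  · intro hg μ₁ μ₂
    rw [hm, hF]
    have := hg (μ₂ - μ₁)
    simp only [g, sub_zero, norm_zero, mul_zero, add_zero] at this ⊢
    have : 0 ≤ ‖a • (x₁ - μ₁) + b • (x₂ - μ₂)‖ ^ 2 / (2 * (a + b)) := by positivity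
    linarith

theorem single_segment_minimizer_iff_general
    (d : ℕ) (xbar1 xbar2 : EuclideanSpace ℝ (Fin d))
    (n1 n2 n : ℕ) (hn1 : 1 ≤ n1) (hn : n = n1 + n2)
    (w lam : ℝ) (hw : 0 < w) (hlam : 0 < lam)
    (h : EuclideanSpace ℝ (Fin d) → EuclideanSpace ℝ (Fin d) → ℝ)
    (hh : ∀ μ1 μ2, h μ1 μ2 = ((n1 : ℝ) / 2) * ‖xbar1 - μ1‖ ^ 2
      + ((n2 : ℝ) / 2) * ‖xbar2 - μ2‖ ^ 2 + lam * w * ‖μ2 - μ1‖)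
    (mubar : EuclideanSpace ℝ (Fin d))
    (hmubar : mubar = (n : ℝ)⁻¹ • ((n1 : ℝ) • xbar1 + (n2 : ℝ) • xbar2)) :
    (∀ μ1 μ2, h mubar mubar ≤ h μ1 μ2) ↔
      ((n1 : ℝ) * (n2 : ℝ) / (n : ℝ)) * ‖xbar2 - xbar1‖ ≤ lam * w := by
  have hN : (0 : ℝ) < n1 + n2 := add_pos_of_pos_of_nonneg (by exact_mod_cast hn1) n2.cast_nonneg
  have hF : h = twoSegmentObjective n1 n2 (lam * w) xbar1 xbar2 := funext₂ hh
  rw [hF, hmubar, hn, Nat.cast_add, forall_twoSegmentObjective_weightedMean_le_iff hN,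
    forall_norm_sq_le_norm_sub_sq_add_norm_iff (by positivity) (by positivity)]

/-- For the two-segment objective
`h(μ₁, μ₂) = (n₁/2)‖x̄₁ - μ₁‖² + (n₂/2)‖x̄₂ - μ₂‖² + λ·w·‖μ₂ - μ₁‖`,
the single-segment point `μ₁ = μ₂ = μ̄ = (n₁x̄₁ + n₂x̄₂)/n` is a global
minimizer if and only if `λ·w ≥ (n₁n₂/n)·‖x̄₂ - x̄₁‖`. -/
theorem single_segment_minimizer_iff
    (d : ℕ) (xbar1 xbar2 : EuclideanSpace ℝ (Fin d))
    (n1 n2 n : ℕ) (hn1 : 1 ≤ n1) (hn2 : 1 ≤ n2) (hn : n = n1 + n2)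
    (w lam : ℝ) (hw : 0 < w) (hlam : 0 < lam)
    (h : EuclideanSpace ℝ (Fin d) → EuclideanSpace ℝ (Fin d) → ℝ)
    (hh : ∀ μ1 μ2, h μ1 μ2 = ((n1 : ℝ) / 2) * ‖xbar1 - μ1‖ ^ 2
      + ((n2 : ℝ) / 2) * ‖xbar2 - μ2‖ ^ 2 + lam * w * ‖μ2 - μ1‖)
    (mubar : EuclideanSpace ℝ (Fin d))
    (hmubar : mubar = (n : ℝ)⁻¹ • ((n1 : ℝ) • xbar1 + (n2 : ℝ) • xbar2)) :
    (∀ μ1 μ2, h mubar mubar ≤ h μ1 μ2) ↔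
      ((n1 : ℝ) * (n2 : ℝ) / (n : ℝ)) * ‖xbar2 - xbar1‖ ≤ lam * w :=
  single_segment_minimizer_iff_general d xbar1 xbar2 n1 n2 n hn1 hn w lam hw hlam h hh mubar hmubar
end

section
/- Let x_1,…,x_n ∈ ℝ^d with n ≥ 2. For a split point 1 ≤ k ≤ n−1, set x̄_1(k) = (1/k)·Σ_{i=1}^{k} x_i, x̄_2(k) = (1/(n−k))·Σ_{i=k+1}^{n} x_i, SSE(k) = Σ_{i=1}^{k} ‖x_i − x̄_1(k)‖² + Σ_{i=k+1}^{n} ‖x_i − x̄_2(k)‖², and G(k) = √(k·(n−k))·‖x̄_2(k) − x̄_1(k)‖. Then a split point k* ∈ {1,…,n−1} maximizes G over {1,…,n−1} if and only if k* minimizes SSE over {1,…,n−1}. (Equivalently: with the weights w_k = √(k(n−k)), the split found by maximizing the relaxed criterion g(k) = (k(n−k)/(n·w_k))·‖x̄_2(k) − x̄_1(k)‖ coincides with the split solving the ℓ0-constrained two-segment least-squares problem.) -/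
/-!
Splitting a sample into two segments, the total scatter decomposes as within-segment scatter
plus between-segment scatter (Huygens), and the between part is
`k(n-k)/n · ‖x̄₂(k) - x̄₁(k)‖² = G(k)² / n`. Hence `SSE(k) = const - G(k)² / n`, and since `G ≥ 0`
maximizing `G` is the same as minimizing `SSE`.
-/

open Finset

section

variable {ι E : Type*} [NormedAddCommGroup E] [InnerProductSpace ℝ E]

-- For `s = ∅` this is `0`, since `(0 : ℝ)⁻¹ = 0`; the lemmas below need no nonemptiness.
noncomputable def Finset.mean (s : Finset ι) (x : ι → E) : E := (#s : ℝ)⁻¹ • ∑ i ∈ s, x i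

theorem Finset.sum_norm_sub_mean_sq (s : Finset ι) (x : ι → E) :
    ∑ i ∈ s, ‖x i - s.mean x‖ ^ 2 = ∑ i ∈ s, ‖x i‖ ^ 2 - ‖∑ i ∈ s, x i‖ ^ 2 / #s := by
  rcases s.eq_empty_or_nonempty with rfl | hs
  · simp
  have hc : (#s : ℝ) ≠ 0 := by exact_mod_cast hs.card_pos.ne'
  simp_rw [norm_sub_sq_real, sum_add_distrib, sum_sub_distrib, ← mul_sum, ← sum_inner,
    sum_const, nsmul_eq_mul, mean, real_inner_smul_right, real_inner_self_eq_norm_sq, norm_smul,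
    mul_pow, Real.norm_eq_abs, sq_abs]
  field_simp
  ring

theorem norm_sq_div_add_norm_sq_div (a b : E) {p q : ℝ} (hp : p ≠ 0) (hq : q ≠ 0)
    (hpq : p + q ≠ 0) :
    ‖a‖ ^ 2 / p + ‖b‖ ^ 2 / q =
      ‖a + b‖ ^ 2 / (p + q) + p * q / (p + q) * ‖q⁻¹ • b - p⁻¹ • a‖ ^ 2 := by
  rw [norm_add_sq_real, norm_sub_sq_real, norm_smul, norm_smul, real_inner_smul_left,
    real_inner_smul_right, real_inner_comm, Real.norm_eq_abs, Real.norm_eq_abs, mul_pow, mul_pow,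
    sq_abs, sq_abs]
  field_simp
  ring

theorem Finset.sum_norm_sub_mean_sq_add_of_disjoint [DecidableEq ι] {s t : Finset ι}
    (hst : Disjoint s t) (x : ι → E) :
    ∑ i ∈ s, ‖x i - s.mean x‖ ^ 2 + ∑ i ∈ t, ‖x i - t.mean x‖ ^ 2 =
      ∑ i ∈ s ∪ t, ‖x i - (s ∪ t).mean x‖ ^ 2
        - #s * #t / (#s + #t) * ‖t.mean x - s.mean x‖ ^ 2 := by
  rcases s.eq_empty_or_nonempty with rfl | hs
  · simp
  rcases t.eq_empty_or_nonempty with rfl | ht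
  · simp
  have hp : (#s : ℝ) ≠ 0 := by exact_mod_cast hs.card_pos.ne'
  have hq : (#t : ℝ) ≠ 0 := by exact_mod_cast ht.card_pos.ne'
  have hpq : (#s : ℝ) + #t ≠ 0 := by positivity
  have hbetween := norm_sq_div_add_norm_sq_div (∑ i ∈ s, x i) (∑ i ∈ t, x i) hp hq hpq
  rw [sum_norm_sub_mean_sq, sum_norm_sub_mean_sq, sum_norm_sub_mean_sq, sum_union hst,
    sum_union hst, card_union_of_disjoint hst, Nat.cast_add]
  simp only [mean]
  linarith

end

theorem sub_sq_div_le_sub_sq_div_iff {a b c : ℝ} (C : ℝ) (ha : 0 ≤ a) (hb : 0 ≤ b) (hc : 0 < c) :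
    C - b ^ 2 / c ≤ C - a ^ 2 / c ↔ a ≤ b := by
  rw [sub_le_sub_iff_left, div_le_div_iff_of_pos_right hc, pow_le_pow_iff_left₀ ha hb two_ne_zero]

theorem weighted_split_eq_l0_split_general
    (d n : ℕ)
    (x : ℕ → EuclideanSpace ℝ (Fin d))
    (xbar1 xbar2 : ℕ → EuclideanSpace ℝ (Fin d))
    (hxbar1 : ∀ k, xbar1 k = (k : ℝ)⁻¹ • ∑ i ∈ Finset.Icc 1 k, x i)
    (hxbar2 : ∀ k, xbar2 k = ((n - k : ℕ) : ℝ)⁻¹ • ∑ i ∈ Finset.Icc (k + 1) n, x i)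
    (SSE G : ℕ → ℝ)
    (hSSE : ∀ k, SSE k = (∑ i ∈ Finset.Icc 1 k, ‖x i - xbar1 k‖ ^ 2)
      + ∑ i ∈ Finset.Icc (k + 1) n, ‖x i - xbar2 k‖ ^ 2)
    (hG : ∀ k, G k = Real.sqrt ((k : ℝ) * ((n - k : ℕ) : ℝ)) * ‖xbar2 k - xbar1 k‖)
    (kstar : ℕ) (hkstar : kstar ∈ Finset.Icc 1 (n - 1)) :
    (∀ k ∈ Finset.Icc 1 (n - 1), G k ≤ G kstar) ↔
      (∀ k ∈ Finset.Icc 1 (n - 1), SSE kstar ≤ SSE k) := by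
  have hle : ∀ k ∈ Icc 1 (n - 1), k ≤ n := fun k hk => by have := mem_Icc.mp hk; omega
  have hn : (0 : ℝ) < n := by have := mem_Icc.mp hkstar; exact_mod_cast (by omega : 0 < n)
  have hG_nonneg : ∀ k, 0 ≤ G k := fun k => hG k ▸ by positivity
  set total := ∑ i ∈ Icc 1 n, ‖x i - (Icc 1 n).mean x‖ ^ 2
  have hSSE_eq : ∀ k ≤ n, SSE k = total - G k ^ 2 / n := by
    intro k hk
    have hmean1 : xbar1 k = (Icc 1 k).mean x := by
      rw [hxbar1, mean, Nat.card_Icc, Nat.add_sub_cancel]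
    have hmean2 : xbar2 k = (Icc (k + 1) n).mean x := by
      rw [hxbar2, mean, Nat.card_Icc, Nat.add_sub_add_right]
    have hunion : Icc 1 k ∪ Icc (k + 1) n = Icc 1 n := by
      ext i; simp only [mem_union, mem_Icc]; omega
    have hdisj : Disjoint (Icc 1 k) (Icc (k + 1) n) :=
      disjoint_left.mpr fun i hi hi' => by simp only [mem_Icc] at hi hi'; omega
    rw [hSSE, hmean1, hmean2, sum_norm_sub_mean_sq_add_of_disjoint hdisj, hunion, hG, mul_pow,
      Real.sq_sqrt (by positivity), ← hmean1, ← hmean2, Nat.card_Icc, Nat.card_Icc,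
      Nat.add_sub_cancel, Nat.add_sub_add_right, ← Nat.cast_add, Nat.add_sub_cancel' hk]
    ring
  refine forall₂_congr fun k hk => ?_
  rw [hSSE_eq k (hle k hk), hSSE_eq kstar (hle kstar hkstar),
    sub_sq_div_le_sub_sq_div_iff _ (hG_nonneg k) (hG_nonneg kstar) hn]

/-- With weights `wₖ = √(k(n-k))`, a split point maximizes the relaxed
criterion `G(k) = √(k(n-k))·‖x̄₂(k) - x̄₁(k)‖` over `{1,…,n-1}` if and only
if it minimizes the two-segment sum of squared errors `SSE(k)`. -/
theorem weighted_split_eq_l0_split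
    (d n : ℕ) (hn : 2 ≤ n)
    (x : ℕ → EuclideanSpace ℝ (Fin d))
    (xbar1 xbar2 : ℕ → EuclideanSpace ℝ (Fin d))
    (hxbar1 : ∀ k, xbar1 k = (k : ℝ)⁻¹ • ∑ i ∈ Finset.Icc 1 k, x i)
    (hxbar2 : ∀ k, xbar2 k = ((n - k : ℕ) : ℝ)⁻¹ • ∑ i ∈ Finset.Icc (k + 1) n, x i)
    (SSE G : ℕ → ℝ)
    (hSSE : ∀ k, SSE k = (∑ i ∈ Finset.Icc 1 k, ‖x i - xbar1 k‖ ^ 2)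
      + ∑ i ∈ Finset.Icc (k + 1) n, ‖x i - xbar2 k‖ ^ 2)
    (hG : ∀ k, G k = Real.sqrt ((k : ℝ) * ((n - k : ℕ) : ℝ)) * ‖xbar2 k - xbar1 k‖)
    (kstar : ℕ) (hkstar : kstar ∈ Finset.Icc 1 (n - 1)) :
    (∀ k ∈ Finset.Icc 1 (n - 1), G k ≤ G kstar) ↔
      (∀ k ∈ Finset.Icc 1 (n - 1), SSE kstar ≤ SSE k) :=
  weighted_split_eq_l0_split_general d n x xbar1 xbar2 hxbar1 hxbar2 SSE G hSSE hG kstar hkstar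
end

section
/- Let (Ω, F, P) be a probability space and X_1,…,X_n independent real-valued random variables with |X_i| ≤ M/2 almost surely for some M > 0, E[X_i] = μ1 for 1 ≤ i ≤ n1 and E[X_i] = μ2 for n1 < i ≤ n, where n1, n2 ≥ 1, n = n1 + n2, and Δμ := μ2 − μ1 > 0. Then for every integer m with 1 ≤ m ≤ n2 − 1, P(W_m^− < 0) ≤ exp( −2·n1²·m·Δμ² / (M²·n·(n−m)) ). -/
/-!
Writing `S_k = ∑_{i ≤ k} X_i`, each scaled mean difference is
`(p q / n) · (mean of the last q - mean of the first p) = (p / n) · S_n - S_p`, so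
`W_m^- = (S_{n₁+m} - S_{n₁}) - (m / n) · S_n = ∑ᵢ wᵢ Xᵢ` with `wᵢ = 𝟙[n₁ < i ≤ n₁ + m] - m / n`.
This linear statistic has mean `m n₁ Δμ / n` and `∑ wᵢ² = m (n - m) / n`, so `W_m^- < 0` is a
downward deviation of size `m n₁ Δμ / n`, which Hoeffding's inequality controls.
-/

open MeasureTheory ProbabilityTheory Real Finset

theorem measureReal_sum_mul_le_sub_le_of_iIndepFun {Ω ι : Type*} [MeasurableSpace Ω]
    {P : Measure Ω} [IsProbabilityMeasure P] {X : ι → Ω → ℝ} (hindep : iIndepFun X P)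
    {s : Finset ι} (hX : ∀ i ∈ s, AEMeasurable (X i) P) {a b : ι → ℝ}
    (hbdd : ∀ i ∈ s, ∀ᵐ ω ∂P, X i ω ∈ Set.Icc (a i) (b i)) (w : ι → ℝ) {ε : ℝ} (hε : 0 ≤ ε) :
    P.real {ω | ∑ i ∈ s, w i * X i ω ≤ ∑ i ∈ s, w i * P[X i] - ε} ≤
      exp (-2 * ε ^ 2 / ∑ i ∈ s, (w i * (b i - a i)) ^ 2) := by
  let c : ι → NNReal := fun i ↦ ⟨(-w i) ^ 2, sq_nonneg _⟩ * (‖b i - a i‖₊ / 2) ^ 2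
  have hc : ∀ i, (c i : ℝ) = (w i * (b i - a i)) ^ 2 / 4 := fun i ↦ by
    show (-w i) ^ 2 * ((‖b i - a i‖₊ : ℝ) / 2) ^ 2 = _
    rw [coe_nnnorm, Real.norm_eq_abs, div_pow, sq_abs]
    ring
  have hsubG : ∀ i ∈ s, HasSubgaussianMGF (fun ω ↦ -w i * (X i ω - P[X i])) (c i) P :=
    fun i hi ↦ (hasSubgaussianMGF_of_mem_Icc (hX i hi) (hbdd i hi)).const_mul (-w i)
  have hindep' : iIndepFun (fun i ω ↦ -w i * (X i ω - P[X i])) P :=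
    hindep.comp (fun i (x : ℝ) ↦ -w i * (x - ∫ ω, X i ω ∂P)) fun i ↦ by fun_prop
  calc P.real {ω | ∑ i ∈ s, w i * X i ω ≤ ∑ i ∈ s, w i * P[X i] - ε}
      ≤ P.real {ω | ε ≤ ∑ i ∈ s, -w i * (X i ω - P[X i])} := by
        refine measureReal_mono fun ω hω ↦ ?_
        simp only [Set.mem_ofPred_eq, mul_sub, sum_sub_distrib, neg_mul,
          sum_neg_distrib] at hω ⊢
        linarith
    _ ≤ exp (-ε ^ 2 / (2 * ∑ i ∈ s, c i)) :=
        HasSubgaussianMGF.measure_sum_ge_le_of_iIndepFun hindep' hsubG hε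
    _ = _ := by
        push_cast
        simp only [hc, ← sum_div]
        ring_nf

theorem sum_ite_mem_sub_mul {ι : Type*} [DecidableEq ι] {s t : Finset ι} (hts : t ⊆ s)
    (α : ℝ) (x : ι → ℝ) :
    ∑ i ∈ s, ((if i ∈ t then 1 else 0) - α) * x i = ∑ i ∈ t, x i - α * ∑ i ∈ s, x i := by
  simp only [sub_mul, ite_mul, one_mul, zero_mul, sum_sub_distrib, sum_ite_mem,
    inter_eq_right.2 hts, mul_sum]

theorem sum_ite_mem_sub_sq {ι : Type*} [DecidableEq ι] {s t : Finset ι} (hts : t ⊆ s) (α : ℝ) :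
    ∑ i ∈ s, ((if i ∈ t then 1 else 0) - α) ^ 2 = #t * (1 - α) ^ 2 + (#s - #t) * α ^ 2 := by
  have hsum : ∑ i ∈ s, ((if i ∈ t then 1 else 0) - α) = #t - α * #s := by
    simpa using sum_ite_mem_sub_mul hts α 1
  have hsum_t : ∑ i ∈ t, ((if i ∈ t then 1 else 0) - α) = #t * (1 - α) := by
    rw [sum_congr rfl fun i hi ↦ by rw [if_pos hi], sum_const, nsmul_eq_mul]
  simp only [sq, sum_ite_mem_sub_mul hts, hsum, hsum_t]
  ring

theorem Finset.Icc_one_eq_Ioc_zero (k : ℕ) : Icc 1 k = Ioc 0 k := Icc_add_one_left_eq_Ioc 0 k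

theorem sum_Icc_of_eq_on_blocks (f : ℕ → ℝ) {n1 n2 : ℕ} {a b : ℝ}
    (h1 : ∀ i ∈ Icc 1 n1, f i = a) (h2 : ∀ i ∈ Icc (n1 + 1) (n1 + n2), f i = b) :
    ∑ i ∈ Icc 1 (n1 + n2), f i = n1 * a + n2 * b := by
  rw [Icc_one_eq_Ioc_zero, ← sum_Ioc_consecutive f (Nat.zero_le n1) (Nat.le_add_right n1 n2),
    ← Icc_one_eq_Ioc_zero, ← Icc_add_one_left_eq_Ioc, sum_congr rfl h1, sum_congr rfl h2]
  simp

noncomputable def cusumWeight (n1 n2 m i : ℕ) : ℝ :=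
  (if i ∈ Icc (n1 + 1) (n1 + m) then 1 else 0) - m / (n1 + n2)

theorem cusum_contrast_sub_eq_sum_cusumWeight_mul (x : ℕ → ℝ) {n1 n2 m : ℕ} (hn1 : n1 ≠ 0)
    (hm : m < n2) :
    (n1 : ℝ) * n2 / (n1 + n2) * (1 / (n2 : ℝ) * ∑ i ∈ Icc (n1 + 1) (n1 + n2), x i
        - 1 / (n1 : ℝ) * ∑ i ∈ Icc 1 n1, x i)
      - ((n1 : ℝ) + m) * ((n2 : ℝ) - m) / (n1 + n2) *
        (1 / ((n2 : ℝ) - m) * ∑ i ∈ Icc (n1 + m + 1) (n1 + n2), x i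
          - 1 / ((n1 : ℝ) + m) * ∑ i ∈ Icc 1 (n1 + m), x i)
      = ∑ i ∈ Icc 1 (n1 + n2), cusumWeight n1 n2 m i * x i := by
  simp only [cusumWeight]
  rw [sum_ite_mem_sub_mul (Icc_subset_Icc (by omega) (by omega))]
  simp only [Icc_one_eq_Ioc_zero, Icc_add_one_left_eq_Ioc]
  have hAB := sum_Ioc_consecutive x (Nat.zero_le n1) (Nat.le_add_right n1 m)
  have hBC := sum_Ioc_consecutive x (Nat.le_add_right n1 m) (by omega : n1 + m ≤ n1 + n2)
  have hABC := sum_Ioc_consecutive x (Nat.zero_le (n1 + m)) (by omega : n1 + m ≤ n1 + n2)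
  rw [← hBC, ← hABC, ← hAB]
  have : (n2 : ℝ) - m ≠ 0 := sub_ne_zero.2 (by exact_mod_cast hm.ne')
  have : (n2 : ℝ) ≠ 0 := by exact_mod_cast (by omega : n2 ≠ 0)
  field_simp
  ring

theorem sum_cusumWeight_mul {n1 n2 m : ℕ} (hn1 : n1 ≠ 0) (hm : m ≤ n2) (μ : ℕ → ℝ)
    {μ1 μ2 : ℝ} (hμ1 : ∀ i ∈ Icc 1 n1, μ i = μ1) (hμ2 : ∀ i ∈ Icc (n1 + 1) (n1 + n2), μ i = μ2) :
    ∑ i ∈ Icc 1 (n1 + n2), cusumWeight n1 n2 m i * μ i = n1 * m * (μ2 - μ1) / (n1 + n2) := by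
  have hblock : Icc (n1 + 1) (n1 + m) ⊆ Icc (n1 + 1) (n1 + n2) := Icc_subset_Icc_right (by omega)
  simp only [cusumWeight]
  rw [sum_ite_mem_sub_mul (hblock.trans (Icc_subset_Icc (by omega) le_rfl)),
    sum_Icc_of_eq_on_blocks μ hμ1 hμ2, sum_congr rfl fun i hi ↦ hμ2 i (hblock hi), sum_const,
    Nat.card_Icc, Nat.add_sub_add_right, Nat.add_sub_cancel_left, nsmul_eq_mul]
  have : (n1 : ℝ) ≠ 0 := by exact_mod_cast hn1
  field_simp
  ring

theorem sum_cusumWeight_sq {n1 n2 m : ℕ} (hn1 : n1 ≠ 0) (hm : m ≤ n2) :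
    ∑ i ∈ Icc 1 (n1 + n2), cusumWeight n1 n2 m i ^ 2 = m * (n1 + n2 - m) / (n1 + n2) := by
  simp only [cusumWeight]
  rw [sum_ite_mem_sub_sq (Icc_subset_Icc (by omega) (by omega)),
    Nat.card_Icc, Nat.card_Icc, Nat.add_sub_add_right, Nat.add_sub_cancel_left,
    Nat.add_sub_cancel]
  have : (n1 : ℝ) ≠ 0 := by exact_mod_cast hn1
  push_cast
  field_simp
  ring

theorem hoeffding_bound_W_minus_general
    {Ω : Type*} [MeasurableSpace Ω] (P : Measure Ω) [IsProbabilityMeasure P]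
    (n1 n2 n : ℕ) (hn1 : 1 ≤ n1) (hn2 : 1 ≤ n2) (hn : n = n1 + n2)
    (X : ℕ → Ω → ℝ) (hXmeas : ∀ i, Measurable (X i))
    (hindep : iIndepFun X P)
    (M : ℝ)
    (hbdd : ∀ i ∈ Finset.Icc 1 n, ∀ᵐ ω ∂P, |X i ω| ≤ M / 2)
    (μ1 μ2 : ℝ) (hΔμ : 0 < μ2 - μ1)
    (hmean1 : ∀ i ∈ Finset.Icc 1 n1, ∫ ω, X i ω ∂P = μ1)
    (hmean2 : ∀ i ∈ Finset.Icc (n1 + 1) n, ∫ ω, X i ω ∂P = μ2)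
    (m : ℕ) (hm : m ≤ n2 - 1)
    (Y : ℕ → Ω → ℝ)
    (hY : ∀ k ω, Y k ω = (1 / ((n2 : ℝ) - k)) * ∑ i ∈ Finset.Icc (n1 + k + 1) n, X i ω
      - (1 / ((n1 : ℝ) + k)) * ∑ i ∈ Finset.Icc 1 (n1 + k), X i ω)
    (W : Ω → ℝ)
    (hW : ∀ ω, W ω = ((n1 : ℝ) * n2 / n) * Y 0 ω
      - (((n1 : ℝ) + m) * ((n2 : ℝ) - m) / n) * Y m ω) :
    P {ω | W ω < 0} ≤ ENNReal.ofReal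
      (Real.exp (-(2 * (n1 : ℝ) ^ 2 * m * (μ2 - μ1) ^ 2)
        / (M ^ 2 * n * ((n : ℝ) - m)))) := by
  subst hn
  have hmn2 : m < n2 := by omega
  have hn1_ne : n1 ≠ 0 := by omega
  have hW_sum : ∀ ω, W ω = ∑ i ∈ Icc 1 (n1 + n2), cusumWeight n1 n2 m i * X i ω := fun ω ↦ by
    rw [hW, hY, hY, ← cusum_contrast_sub_eq_sum_cusumWeight_mul _ hn1_ne hmn2]
    push_cast
    simp only [add_zero, sub_zero]
  have hbound := measureReal_sum_mul_le_sub_le_of_iIndepFun hindep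
    (fun i _ ↦ (hXmeas i).aemeasurable) (a := fun _ ↦ -(M / 2)) (b := fun _ ↦ M / 2)
    (fun i hi ↦ (hbdd i hi).mono fun ω h ↦ abs_le.1 h) (cusumWeight n1 n2 m)
    (ε := n1 * m * (μ2 - μ1) / (n1 + n2)) (by positivity)
  simp only [sum_cusumWeight_mul hn1_ne hmn2.le _ hmean1 hmean2, sub_self, sub_neg_eq_add,
    add_halves, mul_pow, ← sum_mul, sum_cusumWeight_sq hn1_ne hmn2.le] at hbound
  rw [ENNReal.le_ofReal_iff_toReal_le (measure_ne_top _ _) (exp_pos _).le, ← measureReal_def]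
  calc P.real {ω | W ω < 0}
      ≤ P.real {ω | ∑ i ∈ Icc 1 (n1 + n2), cusumWeight n1 n2 m i * X i ω ≤ 0} :=
        measureReal_mono fun ω (hω : W ω < 0) ↦ show _ ≤ _ from hW_sum ω ▸ hω.le
    _ ≤ _ := hbound
    _ = _ := by
        push_cast
        field_simp

/-- Hoeffding bound on `P(W_m^- < 0)` for bounded independent samples whose
means shift from `μ₁` to `μ₂ > μ₁` at the boundary `n₁`:
`P(W_m^- < 0) ≤ exp(-2n₁²mΔμ²/(M²n(n-m)))`. -/
theorem hoeffding_bound_W_minus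
    {Ω : Type*} [MeasurableSpace Ω] (P : Measure Ω) [IsProbabilityMeasure P]
    (n1 n2 n : ℕ) (hn1 : 1 ≤ n1) (hn2 : 1 ≤ n2) (hn : n = n1 + n2)
    (X : ℕ → Ω → ℝ) (hXmeas : ∀ i, Measurable (X i))
    (hindep : iIndepFun X P)
    (M : ℝ) (hM : 0 < M)
    (hbdd : ∀ i ∈ Finset.Icc 1 n, ∀ᵐ ω ∂P, |X i ω| ≤ M / 2)
    (hint : ∀ i ∈ Finset.Icc 1 n, Integrable (X i) P)
    (μ1 μ2 : ℝ) (hΔμ : 0 < μ2 - μ1)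
    (hmean1 : ∀ i ∈ Finset.Icc 1 n1, ∫ ω, X i ω ∂P = μ1)
    (hmean2 : ∀ i ∈ Finset.Icc (n1 + 1) n, ∫ ω, X i ω ∂P = μ2)
    (m : ℕ) (hm1 : 1 ≤ m) (hm : m ≤ n2 - 1)
    (Y : ℕ → Ω → ℝ)
    (hY : ∀ k ω, Y k ω = (1 / ((n2 : ℝ) - k)) * ∑ i ∈ Finset.Icc (n1 + k + 1) n, X i ω
      - (1 / ((n1 : ℝ) + k)) * ∑ i ∈ Finset.Icc 1 (n1 + k), X i ω)
    (W : Ω → ℝ)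
    (hW : ∀ ω, W ω = ((n1 : ℝ) * n2 / n) * Y 0 ω
      - (((n1 : ℝ) + m) * ((n2 : ℝ) - m) / n) * Y m ω) :
    P {ω | W ω < 0} ≤ ENNReal.ofReal
      (Real.exp (-(2 * (n1 : ℝ) ^ 2 * m * (μ2 - μ1) ^ 2)
        / (M ^ 2 * n * ((n : ℝ) - m)))) :=
  hoeffding_bound_W_minus_general P n1 n2 n hn1 hn2 hn X hXmeas hindep M hbdd μ1 μ2 hΔμ hmean1
    hmean2 m hm Y hY W hW
end

section
/- Let n1 ≥ 1, n2 ≥ 2 be integers, n = n1 + n2, and let m be an integer with 1 ≤ m ≤ n2 − 1. Then m·(n−m−4n1) + 4·n1·(n−n1) > 0 and (2n2 − m)²·(n − m) ≥ m·( m·(n−m−4n1) + 4·n1·(n−n1) ). Consequently, exp( −2·n1²·(2n2−m)²·Δμ² / (M²·n·(m·(n−m−4n1)+4·n1·(n−n1))) ) ≤ exp( −2·n1²·m·Δμ² / (M²·n·(n−m)) ) for all reals Δμ and M > 0. -/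
/-!
Writing `D = m(n-m-4n₁) + 4n₁(n-n₁)`, substituting `n = n₁ + n₂` gives
`D = m(n₂-m) + n₁(4n₂-3m)`, which is positive for `0 < m < n₂`, and the polynomial identity
`(2n₂-m)²(n-m) - m·D = 4n(n₂-m)²`. Hence `m/(n-m) ≤ (2n₂-m)²/D`, and the comparison of the
two bounds follows since `exp` is monotone.
-/

open Real

theorem exp_neg_div_le_exp_neg_div {c d w x y p q : ℝ} (hc : 0 ≤ c) (hd : 0 ≤ d) (hw : 0 < w)
    (hp : 0 < p) (hq : 0 < q) (h : y * p ≤ x * q) :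
    exp (-(c * x * d) / (w * p)) ≤ exp (-(c * y * d) / (w * q)) := by
  rw [exp_le_exp, neg_div, neg_div, neg_le_neg_iff, div_le_div_iff₀ (by positivity) (by positivity)]
  calc c * y * d * (w * p) = c * d * w * (y * p) := by ring
    _ ≤ c * d * w * (x * q) := by gcongr
    _ = c * x * d * (w * q) := by ring

namespace HoeffdingComparison

variable {a b n m : ℝ}

theorem denom_eq (hn : n = a + b) :
    m * (n - m - 4 * a) + 4 * a * (n - a) = m * (b - m) + a * (4 * b - 3 * m) := by
  subst hn; ring

theorem denom_pos (hn : n = a + b) (ha : 0 ≤ a) (hm : 0 < m) (hmb : m < b) :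
    0 < m * (n - m - 4 * a) + 4 * a * (n - a) := by
  rw [denom_eq hn]
  have hleft : 0 < m * (b - m) := mul_pos hm (by linarith)
  have hright : 0 ≤ a * (4 * b - 3 * m) := mul_nonneg ha (by linarith)
  linarith

theorem sq_mul_sub_sub_mul_denom (hn : n = a + b) :
    (2 * b - m) ^ 2 * (n - m) - m * (m * (n - m - 4 * a) + 4 * a * (n - a))
      = 4 * n * (b - m) ^ 2 := by
  subst hn; ring

theorem mul_denom_le (hn : n = a + b) (hn0 : 0 ≤ n) :
    m * (m * (n - m - 4 * a) + 4 * a * (n - a)) ≤ (2 * b - m) ^ 2 * (n - m) := by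
  have hgap := sq_mul_sub_sub_mul_denom (m := m) hn
  have hgap_nonneg : 0 ≤ 4 * n * (b - m) ^ 2 := by positivity
  linarith

end HoeffdingComparison

open HoeffdingComparison in
theorem hoeffding_bound_comparison_general
    (n1 n2 n : ℕ) (hn : n = n1 + n2)
    (m : ℕ) (hm1 : 1 ≤ m) (hm : m ≤ n2 - 1) :
    (0 : ℝ) < (m : ℝ) * ((n : ℝ) - m - 4 * n1) + 4 * (n1 : ℝ) * ((n : ℝ) - n1)
    ∧ (m : ℝ) * ((m : ℝ) * ((n : ℝ) - m - 4 * n1) + 4 * (n1 : ℝ) * ((n : ℝ) - n1))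
        ≤ (2 * (n2 : ℝ) - m) ^ 2 * ((n : ℝ) - m)
    ∧ ∀ (Δμ M : ℝ), 0 < M →
      Real.exp (-(2 * (n1 : ℝ) ^ 2 * (2 * (n2 : ℝ) - m) ^ 2 * Δμ ^ 2)
          / (M ^ 2 * n * ((m : ℝ) * ((n : ℝ) - m - 4 * n1) + 4 * (n1 : ℝ) * ((n : ℝ) - n1))))
        ≤ Real.exp (-(2 * (n1 : ℝ) ^ 2 * (m : ℝ) * Δμ ^ 2)
          / (M ^ 2 * n * ((n : ℝ) - m))) := by
  have hnr : (n : ℝ) = n1 + n2 := by exact_mod_cast hn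
  have hmb : (m : ℝ) < n2 := by exact_mod_cast (show m < n2 by omega)
  have hm0 : (0 : ℝ) < m := Nat.cast_pos.mpr hm1
  have hD := denom_pos hnr (Nat.cast_nonneg n1) hm0 hmb
  have hkey := mul_denom_le (m := (m : ℝ)) hnr (Nat.cast_nonneg n)
  have hnm : (0 : ℝ) < n - m := by linarith [(Nat.cast_nonneg n1 : (0 : ℝ) ≤ n1)]
  exact ⟨hD, hkey, fun Δμ M hM =>
    exp_neg_div_le_exp_neg_div (by positivity) (by positivity)
      (mul_pos (by positivity) (by linarith)) hD hnm hkey⟩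

/-- The Hoeffding bound `B⁺` on `P(W_m^+ < 0)` is at most the bound `B⁻` on
`P(W_m^- < 0)` throughout the feasible range `1 ≤ m ≤ n₂ - 1`: the denominator
`m(n-m-4n₁)+4n₁(n-n₁)` is positive, `(2n₂-m)²(n-m) ≥ m(m(n-m-4n₁)+4n₁(n-n₁))`,
and consequently `B⁺ ≤ B⁻`. -/
theorem hoeffding_bound_comparison
    (n1 n2 n : ℕ) (hn1 : 1 ≤ n1) (hn2 : 2 ≤ n2) (hn : n = n1 + n2)
    (m : ℕ) (hm1 : 1 ≤ m) (hm : m ≤ n2 - 1) :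
    (0 : ℝ) < (m : ℝ) * ((n : ℝ) - m - 4 * n1) + 4 * (n1 : ℝ) * ((n : ℝ) - n1)
    ∧ (m : ℝ) * ((m : ℝ) * ((n : ℝ) - m - 4 * n1) + 4 * (n1 : ℝ) * ((n : ℝ) - n1))
        ≤ (2 * (n2 : ℝ) - m) ^ 2 * ((n : ℝ) - m)
    ∧ ∀ (Δμ M : ℝ), 0 < M →
      Real.exp (-(2 * (n1 : ℝ) ^ 2 * (2 * (n2 : ℝ) - m) ^ 2 * Δμ ^ 2)
          / (M ^ 2 * n * ((m : ℝ) * ((n : ℝ) - m - 4 * n1) + 4 * (n1 : ℝ) * ((n : ℝ) - n1))))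
        ≤ Real.exp (-(2 * (n1 : ℝ) ^ 2 * (m : ℝ) * Δμ ^ 2)
          / (M ^ 2 * n * ((n : ℝ) - m))) :=
  hoeffding_bound_comparison_general n1 n2 n hn m hm1 hm
end

section
/- Let (Ω, F, P) be a probability space and X_1,…,X_n independent real-valued random variables with |X_i| ≤ M/2 almost surely for some M > 0, E[X_i] = μ1 for 1 ≤ i ≤ n1 and E[X_i] = μ2 for n1 < i ≤ n, where n1, n2 ≥ 1, n = n1 + n2, and Δμ := μ2 − μ1 ≠ 0. Set C = 2·Δμ²·n1² / (M²·n²). Let δ ∈ (0,1) and let m0 be any integer with m0 ≥ log(2·n2/δ)/C and 1 ≤ m0 ≤ n2 − 1. Then P( there exists an integer m with m0 ≤ m ≤ n2 − 1 such that g(0) < g(m) ) ≤ δ; in particular, the probability that the detected split point i* = argmax_{0 ≤ m ≤ n2−1} g(m) is at least m0 samples to the right of the true boundary n1 is at most δ. -/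
/-
Write `W_k = ∑ᵢ (1[i > n₁ + k] - (n₂ - k)/n) Xᵢ`, so that `g(k) = |W_k|`; `W_k` is linear in the
sample with mean `Δμ n₁ (n₂ - k)/n`. If `g(0) < g(m)` then `(W₀ - W_m)(W₀ + W_m) < 0`, while both
factors have means of the sign of `Δμ`, namely `Δμ n₁ m/n` and `Δμ n₁ (2n₂ - m)/n`. So one of the
two linear statistics lands on the wrong side of zero, and Hoeffding's inequality bounds either
event by `exp(-C m)`: the sums of squared weights are at most `m` and `(2n₂ - m)²/m`. A union bound
over `m₀ ≤ m < n₂`, with `exp(-C m₀) ≤ δ/(2n₂)`, gives `δ`.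
-/

open MeasureTheory ProbabilityTheory Real Finset

section Hoeffding

variable {Ω ι : Type*} [MeasurableSpace Ω] {P : Measure Ω} [IsProbabilityMeasure P]
  {X : ι → Ω → ℝ} {s : Finset ι} {M : ℝ}

theorem measureReal_sum_mul_nonpos_le (hX : ∀ i, Measurable (X i))
    (hindep : iIndepFun X P) (hbdd : ∀ i ∈ s, ∀ᵐ ω ∂P, |X i ω| ≤ M / 2) (c : ι → ℝ) {ε σ : ℝ}
    (hσ : ∑ i ∈ s, c i ^ 2 ≤ σ) (hε : 0 ≤ ε) (hmean : ε ≤ ∑ i ∈ s, c i * P[X i]) :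
    P.real {ω | ∑ i ∈ s, c i * X i ω ≤ 0} ≤ exp (-2 * ε ^ 2 / (M ^ 2 * σ)) := by
  set Z : ι → Ω → ℝ := fun i ω => -(c i * (X i ω - P[X i]))
  have hZ : ∀ i ∈ s, HasSubgaussianMGF (Z i) (M ^ 2 / 4 * c i ^ 2).toNNReal P := by
    intro i hi
    have h := (hasSubgaussianMGF_of_mem_Icc (hX i).aemeasurable
      (by filter_upwards [hbdd i hi] with ω hω using abs_le.mp hω)).const_mul (-c i)
    convert h using 1
    · ext ω; simp [Z]
    · ext
      rw [Real.coe_toNNReal _ (by positivity)]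
      change _ = (-c i) ^ 2 * ((‖M / 2 - -(M / 2)‖₊ / 2) ^ 2 : NNReal)
      rw [NNReal.coe_pow, NNReal.coe_div, coe_nnnorm, Real.norm_eq_abs, NNReal.coe_ofNat, div_pow,
        sq_abs]
      ring
  have hsum := HasSubgaussianMGF.sum_of_iIndepFun
    (hindep.comp (fun i x => -(c i * (x - P[X i]))) (fun i => by fun_prop)) hZ
  have hσ0 : 0 ≤ M ^ 2 * σ / 4 := by
    have := (sum_nonneg fun i _ => sq_nonneg (c i)).trans hσ
    positivity
  have hsumσ : HasSubgaussianMGF (fun ω => ∑ i ∈ s, Z i ω) (M ^ 2 * σ / 4).toNNReal P := by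
    refine ⟨hsum.integrable_exp_mul, fun t => (hsum.mgf_le t).trans (exp_le_exp.mpr ?_)⟩
    rw [NNReal.coe_sum, Real.coe_toNNReal _ hσ0]
    simp only [fun i => Real.coe_toNNReal _ (by positivity : 0 ≤ M ^ 2 / 4 * c i ^ 2), ← mul_sum]
    gcongr
    linarith [mul_le_mul_of_nonneg_left hσ (sq_nonneg M)]
  calc P.real {ω | ∑ i ∈ s, c i * X i ω ≤ 0}
      ≤ P.real {ω | ε ≤ ∑ i ∈ s, Z i ω} := by
        refine measureReal_mono (fun ω hω => ?_)
        simp only [Set.mem_ofPred_eq, Z] at hω ⊢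
        simp only [mul_sub, neg_sub, sum_sub_distrib]
        linarith
    _ ≤ exp (-ε ^ 2 / (2 * (M ^ 2 * σ / 4).toNNReal)) := hsumσ.measure_ge_le hε
    _ = exp (-2 * ε ^ 2 / (M ^ 2 * σ)) := by rw [Real.coe_toNNReal _ hσ0]; ring_nf

theorem measureReal_mul_sum_nonpos_le (hX : ∀ i, Measurable (X i))
    (hindep : iIndepFun X P) (hbdd : ∀ i ∈ s, ∀ᵐ ω ∂P, |X i ω| ≤ M / 2) (u : ι → ℝ)
    {Δ σ : ℝ} (hΔ : Δ ≠ 0)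
    (hσ : ∑ i ∈ s, u i ^ 2 ≤ σ) (hpos : 0 ≤ Δ * ∑ i ∈ s, u i * P[X i]) :
    P.real {ω | Δ * ∑ i ∈ s, u i * X i ω ≤ 0}
      ≤ exp (-2 * (∑ i ∈ s, u i * P[X i]) ^ 2 / (M ^ 2 * σ)) := by
  have hσ' : ∑ i ∈ s, (Δ * u i) ^ 2 ≤ Δ ^ 2 * σ := by
    simp only [mul_pow, ← mul_sum]
    exact mul_le_mul_of_nonneg_left hσ (sq_nonneg Δ)
  have h := measureReal_sum_mul_nonpos_le hX hindep hbdd (fun i => Δ * u i) hσ' hpos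
    (by simp only [mul_assoc, ← mul_sum, le_refl])
  simp only [mul_assoc, ← mul_sum] at h
  refine h.trans_eq (congrArg exp ?_)
  rw [show -2 * (Δ * ∑ i ∈ s, u i * P[X i]) ^ 2 / (M ^ 2 * (Δ ^ 2 * σ))
      = Δ ^ 2 * (-2 * (∑ i ∈ s, u i * P[X i]) ^ 2) / (Δ ^ 2 * (M ^ 2 * σ)) by ring,
    mul_div_mul_left _ _ (pow_ne_zero 2 hΔ)]

end Hoeffding

theorem mul_sub_nonpos_or_mul_add_nonpos_of_abs_lt_abs {a b : ℝ} (Δ : ℝ) (h : |a| < |b|) :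
    Δ * (a - b) ≤ 0 ∨ Δ * (a + b) ≤ 0 := by
  by_contra! h'
  have hsq : a ^ 2 < b ^ 2 := sq_lt_sq.mpr h
  nlinarith [mul_pos h'.1 h'.2, sq_nonneg Δ]

theorem exp_neg_mul_le_inv_of_log_div_le {C x m : ℝ} (hC : 0 < C) (hx : 0 < x)
    (h : log x / C ≤ m) : exp (-(C * m)) ≤ x⁻¹ := by
  rw [exp_neg]
  refine inv_anti₀ hx ((log_le_iff_le_exp hx).mp ?_)
  rwa [div_le_iff₀ hC, mul_comm] at h

theorem measureReal_setOf_exists_Icc_le {Ω : Type*} [MeasurableSpace Ω] {P : Measure Ω}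
    [IsFiniteMeasure P] {E : ℕ → Set Ω} {a b : ℕ} {r : ℝ}
    (h : ∀ m ∈ Icc a b, P.real (E m) ≤ r) :
    P.real {ω | ∃ m, a ≤ m ∧ m ≤ b ∧ ω ∈ E m} ≤ #(Icc a b) * r := by
  calc _ ≤ P.real (⋃ m ∈ Icc a b, E m) := by
        refine measureReal_mono ?_ (measure_ne_top _ _)
        rintro ω ⟨m, h1, h2, h3⟩
        exact Set.mem_biUnion (mem_Icc.mpr ⟨h1, h2⟩) h3
    _ ≤ ∑ m ∈ Icc a b, P.real (E m) := measureReal_biUnion_finset_le _ _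
    _ ≤ #(Icc a b) * r := by simpa using sum_le_card_nsmul _ _ _ h

def tailIndicator (a i : ℕ) : ℝ := if a < i then 1 else 0

theorem sum_Icc_succ_eq_sum_tailIndicator_mul (a n : ℕ) (f : ℕ → ℝ) :
    ∑ i ∈ Icc (a + 1) n, f i = ∑ i ∈ Icc 1 n, tailIndicator a i * f i := by
  simp only [tailIndicator, ite_mul, one_mul, zero_mul, ← sum_filter]
  congr 1
  ext i
  simp only [mem_Icc, mem_filter]
  omega

theorem sum_Icc_one_add_sum_Icc_succ {a n : ℕ} (h : a ≤ n) (f : ℕ → ℝ) :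
    ∑ i ∈ Icc 1 a, f i + ∑ i ∈ Icc (a + 1) n, f i = ∑ i ∈ Icc 1 n, f i := by
  rw [Icc_add_one_left_eq_Ioc, show Icc 1 = Ioc 0 from funext (Icc_add_one_left_eq_Ioc 0),
    sum_Ioc_consecutive _ (Nat.zero_le a) h]

theorem sum_Icc_tailIndicator {a b n : ℕ} (hab : a ≤ b) (hbn : b ≤ n) (φ : ℝ → ℝ → ℝ) :
    ∑ i ∈ Icc 1 n, φ (tailIndicator a i) (tailIndicator b i)
      = a * φ 0 0 + ((b : ℝ) - a) * φ 1 0 + ((n : ℝ) - b) * φ 1 1 := by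
  rw [show Icc 1 n = Ioc 0 n from Icc_add_one_left_eq_Ioc 0 n,
    ← sum_Ioc_consecutive _ (Nat.zero_le a) (hab.trans hbn), ← sum_Ioc_consecutive _ hab hbn]
  have h1 : ∀ i ∈ Ioc 0 a, φ (tailIndicator a i) (tailIndicator b i) = φ 0 0 := by
    intro i hi
    rw [mem_Ioc] at hi
    simp only [tailIndicator, if_neg (show ¬ a < i by omega), if_neg (show ¬ b < i by omega)]
  have h2 : ∀ i ∈ Ioc a b, φ (tailIndicator a i) (tailIndicator b i) = φ 1 0 := by
    intro i hi
    rw [mem_Ioc] at hi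
    simp only [tailIndicator, if_pos hi.1, if_neg (show ¬ b < i by omega)]
  have h3 : ∀ i ∈ Ioc b n, φ (tailIndicator a i) (tailIndicator b i) = φ 1 1 := by
    intro i hi
    rw [mem_Ioc] at hi
    simp only [tailIndicator, if_pos hi.1, if_pos (show a < i by omega)]
  rw [sum_congr rfl h1, sum_congr rfl h2, sum_congr rfl h3]
  simp only [sum_const, Nat.card_Ioc, nsmul_eq_mul, Nat.cast_sub hab, Nat.cast_sub hbn,
    Nat.sub_zero]
  ring

theorem eq_add_mul_tailIndicator {f : ℕ → ℝ} {n1 n : ℕ} {μ1 μ2 : ℝ}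
    (h1 : ∀ i ∈ Icc 1 n1, f i = μ1) (h2 : ∀ i ∈ Icc (n1 + 1) n, f i = μ2) :
    ∀ i ∈ Icc 1 n, f i = μ1 + (μ2 - μ1) * tailIndicator n1 i := by
  intro i hi
  rw [mem_Icc] at hi
  by_cases h : n1 < i
  · simp [tailIndicator, h, h2 i (mem_Icc.mpr ⟨h, hi.2⟩)]
  · simp [tailIndicator, h, h1 i (mem_Icc.mpr ⟨hi.1, not_lt.mp h⟩)]

-- With `S`, `T` the sums of the first `n₁ + k` and of the remaining samples, the criterion is
-- `|(n₁ + k) T - (n₂ - k) S| / n = |T - (n₂ - k)/n · (S + T)|`, whence these weights.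
noncomputable def splitWeight (n1 n2 k i : ℕ) : ℝ :=
  tailIndicator (n1 + k) i - ((n2 : ℝ) - k) / (n1 + n2 : ℕ)

noncomputable def splitStat (n1 n2 k : ℕ) (f : ℕ → ℝ) : ℝ :=
  ∑ i ∈ Icc 1 (n1 + n2), splitWeight n1 n2 k i * f i

section SplitStat

variable {n1 n2 : ℕ}

theorem criterion_eq_abs_splitStat {k : ℕ} (hk : k < n2) (hpos : 0 < n1 + k) (f : ℕ → ℝ) :
    ((n1 : ℝ) + k) * ((n2 : ℝ) - k) / (n1 + n2 : ℕ) *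
        |1 / ((n2 : ℝ) - k) * ∑ i ∈ Icc (n1 + k + 1) (n1 + n2), f i
          - 1 / ((n1 : ℝ) + k) * ∑ i ∈ Icc 1 (n1 + k), f i|
      = |splitStat n1 n2 k f| := by
  have hk' : (0 : ℝ) < n2 - k := sub_pos.mpr (by exact_mod_cast hk)
  have hpos' : (0 : ℝ) < n1 + k := by exact_mod_cast hpos
  have hn : (0 : ℝ) < (n1 + n2 : ℕ) := by exact_mod_cast (show 0 < n1 + n2 by omega)
  have hhead := sum_Icc_one_add_sum_Icc_succ (show n1 + k ≤ n1 + n2 by omega) f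
  rw [← abs_of_pos (div_pos (mul_pos hpos' hk') hn),
    ← abs_mul, eq_sub_of_add_eq hhead, sum_Icc_succ_eq_sum_tailIndicator_mul]
  simp only [splitStat, splitWeight, sub_mul, sum_sub_distrib, ← mul_sum]
  congr 1
  push_cast at hn ⊢
  field_simp
  ring

theorem splitStat_mean {k : ℕ} (hk : k ≤ n2) (hn : 0 < n1 + n2) (μ1 Δ : ℝ) :
    splitStat n1 n2 k (fun i => μ1 + Δ * tailIndicator n1 i)
      = Δ * n1 * (n2 - k) / (n1 + n2 : ℕ) := by
  have hn' : (0 : ℝ) < n1 + n2 := by exact_mod_cast hn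
  simp only [splitStat, splitWeight]
  rw [sum_Icc_tailIndicator (by omega) (by omega)
    (fun x y => (y - ((n2 : ℝ) - k) / (n1 + n2 : ℕ)) * (μ1 + Δ * x))]
  push_cast
  field_simp
  ring

theorem sum_splitWeight_sub_mul (k l : ℕ) (f : ℕ → ℝ) :
    ∑ i ∈ Icc 1 (n1 + n2), (splitWeight n1 n2 k i - splitWeight n1 n2 l i) * f i
      = splitStat n1 n2 k f - splitStat n1 n2 l f := by
  simp only [splitStat, sub_mul, sum_sub_distrib]

theorem sum_splitWeight_add_mul (k l : ℕ) (f : ℕ → ℝ) :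
    ∑ i ∈ Icc 1 (n1 + n2), (splitWeight n1 n2 k i + splitWeight n1 n2 l i) * f i
      = splitStat n1 n2 k f + splitStat n1 n2 l f := by
  simp only [splitStat, add_mul, sum_add_distrib]

theorem sum_splitWeight_sub_mul_mean (hn : 0 < n1 + n2) {m : ℕ} (hm : m ≤ n2) (μ1 Δ : ℝ) :
    ∑ i ∈ Icc 1 (n1 + n2), (splitWeight n1 n2 0 i - splitWeight n1 n2 m i)
        * (μ1 + Δ * tailIndicator n1 i) = Δ * n1 * m / (n1 + n2 : ℕ) := by
  rw [sum_splitWeight_sub_mul, splitStat_mean (Nat.zero_le n2) hn, splitStat_mean hm hn]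
  push_cast
  ring

theorem sum_splitWeight_add_mul_mean (hn : 0 < n1 + n2) {m : ℕ} (hm : m ≤ n2) (μ1 Δ : ℝ) :
    ∑ i ∈ Icc 1 (n1 + n2), (splitWeight n1 n2 0 i + splitWeight n1 n2 m i)
        * (μ1 + Δ * tailIndicator n1 i) = Δ * n1 * (2 * n2 - m) / (n1 + n2 : ℕ) := by
  rw [sum_splitWeight_add_mul, splitStat_mean (Nat.zero_le n2) hn, splitStat_mean hm hn]
  push_cast
  ring

theorem sum_sq_splitWeight_sub_le (hn : 0 < n1 + n2) {m : ℕ} (hm : m ≤ n2) :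
    ∑ i ∈ Icc 1 (n1 + n2), (splitWeight n1 n2 0 i - splitWeight n1 n2 m i) ^ 2 ≤ m := by
  simp only [splitWeight, add_zero, Nat.cast_zero, sub_zero]
  rw [sum_Icc_tailIndicator (by omega) (by omega) (fun x y =>
    (x - (n2 : ℝ) / (n1 + n2 : ℕ) - (y - ((n2 : ℝ) - m) / (n1 + n2 : ℕ))) ^ 2)]
  have hn' : (0 : ℝ) < n1 + n2 := by exact_mod_cast hn
  push_cast
  calc _ = (m : ℝ) - m ^ 2 / (n1 + n2) := by field_simp; ring
    _ ≤ m := sub_le_self _ (by positivity)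

theorem sum_sq_splitWeight_add_le (hn : 0 < n1 + n2) {m : ℕ} (hm0 : 0 < m) (hm : m ≤ n2) :
    ∑ i ∈ Icc 1 (n1 + n2), (splitWeight n1 n2 0 i + splitWeight n1 n2 m i) ^ 2
      ≤ (2 * (n2 : ℝ) - m) ^ 2 / m := by
  simp only [splitWeight, add_zero, Nat.cast_zero, sub_zero]
  rw [sum_Icc_tailIndicator (by omega) (by omega) (fun x y =>
    (x - (n2 : ℝ) / (n1 + n2 : ℕ) + (y - ((n2 : ℝ) - m) / (n1 + n2 : ℕ))) ^ 2)]
  have hn' : (0 : ℝ) < n1 + n2 := by exact_mod_cast hn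
  have hm' : (0 : ℝ) < m := by exact_mod_cast hm0
  push_cast
  calc _ = 4 * (n2 : ℝ) - 3 * m - (2 * n2 - m) ^ 2 / (n1 + n2) := by field_simp; ring
    _ ≤ 4 * (n2 : ℝ) - 3 * m := sub_le_self _ (by positivity)
    _ ≤ (2 * (n2 : ℝ) - m) ^ 2 / m := by
      rw [le_div_iff₀ hm']
      nlinarith [sq_nonneg ((n2 : ℝ) - m)]

theorem measureReal_abs_splitStat_lt_le {Ω : Type*} [MeasurableSpace Ω] {P : Measure Ω}
    [IsProbabilityMeasure P] {X : ℕ → Ω → ℝ} (hX : ∀ i, Measurable (X i))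
    (hindep : iIndepFun X P) {M : ℝ} (hbdd : ∀ i ∈ Icc 1 (n1 + n2), ∀ᵐ ω ∂P, |X i ω| ≤ M / 2)
    {μ1 μ2 : ℝ} (hΔ : μ2 - μ1 ≠ 0)
    (hmean : ∀ i ∈ Icc 1 (n1 + n2), P[X i] = μ1 + (μ2 - μ1) * tailIndicator n1 i)
    {m : ℕ} (hm0 : 0 < m) (hm : m ≤ n2) :
    P.real {ω | |splitStat n1 n2 0 (X · ω)| < |splitStat n1 n2 m (X · ω)|}
      ≤ 2 * exp (-(2 * (μ2 - μ1) ^ 2 * n1 ^ 2 / (M ^ 2 * (n1 + n2 : ℕ) ^ 2) * m)) := by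
  set Δ := μ2 - μ1
  have hn : 0 < n1 + n2 := by omega
  have hm' : (0 : ℝ) < m := by exact_mod_cast hm0
  have hmn : (m : ℝ) ≤ n2 := by exact_mod_cast hm
  have hn' : (0 : ℝ) < (n1 + n2 : ℕ) := by exact_mod_cast hn
  have h2nm : (0 : ℝ) < 2 * n2 - m := by linarith
  have hmeanSum : ∀ u : ℕ → ℝ, ∑ i ∈ Icc 1 (n1 + n2), u i * P[X i]
      = ∑ i ∈ Icc 1 (n1 + n2), u i * (μ1 + Δ * tailIndicator n1 i) :=
    fun u => sum_congr rfl fun i hi => by rw [hmean i hi]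
  have hD := measureReal_mul_sum_nonpos_le hX hindep hbdd _ hΔ (sum_sq_splitWeight_sub_le hn hm)
    (by
      rw [hmeanSum, sum_splitWeight_sub_mul_mean hn hm]
      exact (by positivity : (0 : ℝ) ≤ Δ ^ 2 * n1 * m / (n1 + n2 : ℕ)).trans_eq (by ring))
  have hS := measureReal_mul_sum_nonpos_le hX hindep hbdd _ hΔ
    (sum_sq_splitWeight_add_le hn hm0 hm) (by
      rw [hmeanSum, sum_splitWeight_add_mul_mean hn hm]
      exact (div_nonneg (mul_nonneg (mul_nonneg (sq_nonneg Δ) n1.cast_nonneg) h2nm.le)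
        hn'.le).trans_eq (by ring))
  rw [hmeanSum, sum_splitWeight_sub_mul_mean hn hm] at hD
  rw [hmeanSum, sum_splitWeight_add_mul_mean hn hm] at hS
  simp only [sum_splitWeight_sub_mul, sum_splitWeight_add_mul] at hD hS
  calc _ ≤ P.real ({ω | Δ * (splitStat n1 n2 0 (X · ω) - splitStat n1 n2 m (X · ω)) ≤ 0}
        ∪ {ω | Δ * (splitStat n1 n2 0 (X · ω) + splitStat n1 n2 m (X · ω)) ≤ 0}) :=
        measureReal_mono fun ω hω => mul_sub_nonpos_or_mul_add_nonpos_of_abs_lt_abs Δ hω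
    _ ≤ _ := measureReal_union_le _ _
    _ ≤ _ := add_le_add hD hS
    _ = _ := by
      have e1 : -2 * (Δ * n1 * m / (n1 + n2 : ℕ)) ^ 2 / (M ^ 2 * m)
          = -(2 * Δ ^ 2 * n1 ^ 2 / (M ^ 2 * (n1 + n2 : ℕ) ^ 2) * m) := by
        field_simp
      have e2 : -2 * (Δ * n1 * (2 * n2 - m) / (n1 + n2 : ℕ)) ^ 2 / (M ^ 2 * ((2 * n2 - m) ^ 2 / m))
          = -(2 * Δ ^ 2 * n1 ^ 2 / (M ^ 2 * (n1 + n2 : ℕ) ^ 2) * m) := by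
        rw [show -2 * (Δ * n1 * (2 * n2 - m) / (n1 + n2 : ℕ)) ^ 2
            = (2 * n2 - m) ^ 2 * (-2 * (Δ * n1 / (n1 + n2 : ℕ)) ^ 2) by ring,
          show M ^ 2 * ((2 * n2 - m) ^ 2 / m) = (2 * n2 - m) ^ 2 * (M ^ 2 / m) by ring,
          mul_div_mul_left _ _ (pow_ne_zero 2 h2nm.ne'), div_div_eq_mul_div]
        ring
      rw [e1, e2]
      ring

end SplitStat

theorem split_consistency_general
    {Ω : Type*} [MeasurableSpace Ω] (P : Measure Ω) [IsProbabilityMeasure P]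
    (n1 n2 n : ℕ) (hn1 : 1 ≤ n1) (hn2 : 1 ≤ n2) (hn : n = n1 + n2)
    (X : ℕ → Ω → ℝ) (hXmeas : ∀ i, Measurable (X i))
    (hindep : iIndepFun X P)
    (M : ℝ) (hM : 0 < M)
    (hbdd : ∀ i ∈ Finset.Icc 1 n, ∀ᵐ ω ∂P, |X i ω| ≤ M / 2)
    (μ1 μ2 : ℝ) (hΔμ : μ2 - μ1 ≠ 0)
    (hmean1 : ∀ i ∈ Finset.Icc 1 n1, ∫ ω, X i ω ∂P = μ1)
    (hmean2 : ∀ i ∈ Finset.Icc (n1 + 1) n, ∫ ω, X i ω ∂P = μ2)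
    (C : ℝ) (hC : C = 2 * (μ2 - μ1) ^ 2 * (n1 : ℝ) ^ 2 / (M ^ 2 * (n : ℝ) ^ 2))
    (Y : ℕ → Ω → ℝ)
    (hY : ∀ k ω, Y k ω = (1 / ((n2 : ℝ) - k)) * ∑ i ∈ Finset.Icc (n1 + k + 1) n, X i ω
      - (1 / ((n1 : ℝ) + k)) * ∑ i ∈ Finset.Icc 1 (n1 + k), X i ω)
    (g : ℕ → Ω → ℝ)
    (hg : ∀ k ω, g k ω = (((n1 : ℝ) + k) * ((n2 : ℝ) - k) / n) * |Y k ω|)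
    (δ : ℝ) (hδ0 : 0 < δ)
    (m0 : ℕ) (hm0 : Real.log (2 * (n2 : ℝ) / δ) / C ≤ (m0 : ℝ))
    (hm01 : 1 ≤ m0) :
    P {ω | ∃ m : ℕ, m0 ≤ m ∧ m ≤ n2 - 1 ∧ g 0 ω < g m ω} ≤ ENNReal.ofReal δ
    ∧ ∀ mstar : Ω → ℕ,
        (∀ ω, mstar ω ≤ n2 - 1 ∧
          ∀ m ≤ n2 - 1, m = mstar ω ∨ g m ω < g (mstar ω) ω) →
        P {ω | m0 ≤ mstar ω} ≤ ENNReal.ofReal δ := by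
  subst hn
  have hCpos : 0 < C := by
    have := sq_pos_of_ne_zero hΔμ
    rw [hC]; positivity
  have hn2' : (0 : ℝ) < n2 := by exact_mod_cast hn2
  have hg' : ∀ k < n2, ∀ ω, g k ω = |splitStat n1 n2 k (X · ω)| := fun k hk ω => by
    rw [hg, hY, criterion_eq_abs_splitStat hk (by omega)]
  have hgm : ∀ m ∈ Icc m0 (n2 - 1), P.real {ω | g 0 ω < g m ω} ≤ δ / n2 := by
    intro m hm
    rw [mem_Icc] at hm
    calc P.real {ω | g 0 ω < g m ω}
        = P.real {ω | |splitStat n1 n2 0 (X · ω)| < |splitStat n1 n2 m (X · ω)|} := by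
          simp only [hg' 0 (by omega), hg' m (by omega)]
      _ ≤ 2 * exp (-(C * m)) := hC ▸ measureReal_abs_splitStat_lt_le hXmeas hindep hbdd hΔμ
          (eq_add_mul_tailIndicator hmean1 hmean2) (by omega) (by omega)
      _ ≤ 2 * (2 * n2 / δ)⁻¹ := by
          gcongr
          exact exp_neg_mul_le_inv_of_log_div_le hCpos (by positivity)
            (hm0.trans (by exact_mod_cast hm.1))
      _ = δ / n2 := by field_simp
  have hfirst : P.real {ω | ∃ m, m0 ≤ m ∧ m ≤ n2 - 1 ∧ g 0 ω < g m ω} ≤ δ := by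
    refine (measureReal_setOf_exists_Icc_le hgm).trans ?_
    calc #(Icc m0 (n2 - 1)) * (δ / n2) ≤ n2 * (δ / n2) := by
          gcongr
          exact_mod_cast (by simp only [Nat.card_Icc]; omega : #(Icc m0 (n2 - 1)) ≤ n2)
      _ = δ := by field_simp
  have hofReal : ∀ S, P.real S ≤ δ → P S ≤ ENNReal.ofReal δ := fun S =>
    (ENNReal.le_ofReal_iff_toReal_le (measure_ne_top P S) hδ0.le).2
  refine ⟨hofReal _ hfirst, fun mstar hmstar =>
    hofReal _ ((measureReal_mono fun ω hω => ?_).trans hfirst)⟩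
  obtain ⟨hle, hmax⟩ := hmstar ω
  have hω' : m0 ≤ mstar ω := hω
  exact ⟨mstar ω, hω', hle, (hmax 0 (Nat.zero_le _)).resolve_left (by omega)⟩

/-- Consistency of the two-segment split criterion: with
`C = 2Δμ²n₁²/(M²n²)`, `δ ∈ (0,1)`, and `m₀ ≥ log(2n₂/δ)/C`, the probability
that `g(0) < g(m)` for some `m₀ ≤ m ≤ n₂ - 1` is at most `δ`; in particular,
the probability that the detected split point (the maximizer of `g`) is at
least `m₀` samples to the right of the true boundary `n₁` is at most `δ`. -/
theorem split_consistency
    {Ω : Type*} [MeasurableSpace Ω] (P : Measure Ω) [IsProbabilityMeasure P]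
    (n1 n2 n : ℕ) (hn1 : 1 ≤ n1) (hn2 : 1 ≤ n2) (hn : n = n1 + n2)
    (X : ℕ → Ω → ℝ) (hXmeas : ∀ i, Measurable (X i))
    (hindep : iIndepFun X P)
    (M : ℝ) (hM : 0 < M)
    (hbdd : ∀ i ∈ Finset.Icc 1 n, ∀ᵐ ω ∂P, |X i ω| ≤ M / 2)
    (hint : ∀ i ∈ Finset.Icc 1 n, Integrable (X i) P)
    (μ1 μ2 : ℝ) (hΔμ : μ2 - μ1 ≠ 0)
    (hmean1 : ∀ i ∈ Finset.Icc 1 n1, ∫ ω, X i ω ∂P = μ1)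
    (hmean2 : ∀ i ∈ Finset.Icc (n1 + 1) n, ∫ ω, X i ω ∂P = μ2)
    (C : ℝ) (hC : C = 2 * (μ2 - μ1) ^ 2 * (n1 : ℝ) ^ 2 / (M ^ 2 * (n : ℝ) ^ 2))
    (Y : ℕ → Ω → ℝ)
    (hY : ∀ k ω, Y k ω = (1 / ((n2 : ℝ) - k)) * ∑ i ∈ Finset.Icc (n1 + k + 1) n, X i ω
      - (1 / ((n1 : ℝ) + k)) * ∑ i ∈ Finset.Icc 1 (n1 + k), X i ω)
    (g : ℕ → Ω → ℝ)
    (hg : ∀ k ω, g k ω = (((n1 : ℝ) + k) * ((n2 : ℝ) - k) / n) * |Y k ω|)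
    (δ : ℝ) (hδ0 : 0 < δ) (hδ1 : δ < 1)
    (m0 : ℕ) (hm0 : Real.log (2 * (n2 : ℝ) / δ) / C ≤ (m0 : ℝ))
    (hm01 : 1 ≤ m0) (hm02 : m0 ≤ n2 - 1) :
    P {ω | ∃ m : ℕ, m0 ≤ m ∧ m ≤ n2 - 1 ∧ g 0 ω < g m ω} ≤ ENNReal.ofReal δ
    ∧ ∀ mstar : Ω → ℕ,
        (∀ ω, mstar ω ≤ n2 - 1 ∧
          ∀ m ≤ n2 - 1, m = mstar ω ∨ g m ω < g (mstar ω) ω) →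
        P {ω | m0 ≤ mstar ω} ≤ ENNReal.ofReal δ :=
  split_consistency_general P n1 n2 n hn1 hn2 hn X hXmeas hindep M hM hbdd μ1 μ2 hΔμ hmean1 hmean2 C
    hC Y hY g hg δ hδ0 m0 hm0 hm01
end
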